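/- Let g₁, g₂, g₃, g₄ : ℂ → ℂ be twice differentiable, let (a₁,a₂,a₃,a₄), (b₁,b₂,b₃,b₄), (c₁,c₂,c₃,c₄), (d₁,d₂,d₃,d₄) ∈ ℂ⁴ and β₁,…,β₄ ∈ ℂ, and define ϑ(x,r,t,z) = g₁(a₁x+a₂r+a₃t+a₄z+β₁) + g₂(b₁x+b₂r+b₃t+b₄z+β₂) + g₃(c₁x+c₂r+c₃t+c₄z+β₃) + g₄(d₁x+d₂r+d₃t+d₄z+β₄). Then at every point ϑ_{tt}·ϑ_{rr} − (ϑ_{rt})² = (b₂d₃−b₃d₂)²g₂''g₄'' + (b₂c₃−b₃c₂)²g₂''g₃'' + (a₂d₃−a₃d₂)²g₁''g₄'' + (c₂a₃−c₃a₂)²g₁''g₃'' + (a₂b₃−a₃b₂)²g₁''g₂'' + (c₂d₃−c₃d₂)²g₃''g₄'', where g_j'' is evaluated at the argument of g_j. In particular, the condition ϑ_{tt}ϑ_{rr} − (ϑ_{rt})² ≠ 0 of existence of the Legendre transformation for the second heavenly equation holds exactly when this sum is nonzero. -/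

import Mathlib

/-- Partial derivative with respect to the first argument. -/
noncomputable def pd1 (f : ℂ → ℂ → ℂ → ℂ → ℂ) (a b c d : ℂ) : ℂ :=
  deriv (fun s => f s b c d) a

/-- Partial derivative with respect to the second argument. -/
noncomputable def pd2 (f : ℂ → ℂ → ℂ → ℂ → ℂ) (a b c d : ℂ) : ℂ :=
  deriv (fun s => f a s c d) b

/-- Partial derivative with respect to the third argument. -/
noncomputable def pd3 (f : ℂ → ℂ → ℂ → ℂ → ℂ) (a b c d : ℂ) : ℂ :=
  deriv (fun s => f a b s d) c

/-!
The Hessian of a plane wave `g (⟪k, X⟫ + β)` is `g'' · k kᵀ`, so the `(r, t)` block of the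
Hessian of `ϑ` is `∑ⱼ gⱼ'' · uⱼ uⱼᵀ`, where `uⱼ` is the `(r, t)`-part of the wave vector `kⱼ`.
The determinant of such a weighted sum of rank-one matrices is, by the Lagrange (Cauchy–Binet)
identity, `∑_{i<j} gᵢ'' gⱼ'' det(uᵢ, uⱼ)²`.
-/

noncomputable def planeWaveSum {n : ℕ} (m : Fin n → ℂ) (g : Fin n → ℂ → ℂ)
    (k : Fin n → Fin 4 → ℂ) (β : Fin n → ℂ) : ℂ → ℂ → ℂ → ℂ → ℂ :=
  fun x r t z => ∑ j, m j * g j (k j 0 * x + k j 1 * r + k j 2 * t + k j 3 * z + β j)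

section PlaneWaveSum

variable {n : ℕ} {m : Fin n → ℂ} {g : Fin n → ℂ → ℂ} {k : Fin n → Fin 4 → ℂ} {β : Fin n → ℂ}

theorem pd2_planeWaveSum (hg : ∀ j, Differentiable ℂ (g j)) :
    pd2 (planeWaveSum m g k β) =
      planeWaveSum (fun j => m j * k j 1) (fun j => deriv (g j)) k β := by
  funext x r t z
  refine (HasDerivAt.fun_sum fun j _ => ?_).deriv
  have hL : HasDerivAt (fun s => k j 0 * x + k j 1 * s + k j 2 * t + k j 3 * z + β j)
      (k j 1) r := by
    simpa using (((((hasDerivAt_id r).const_mul (k j 1)).const_add (k j 0 * x)).add_const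
      (k j 2 * t)).add_const (k j 3 * z)).add_const (β j)
  exact ((((hg j) _).hasDerivAt.comp r hL).const_mul (m j)).congr_deriv (by ring)

theorem pd3_planeWaveSum (hg : ∀ j, Differentiable ℂ (g j)) :
    pd3 (planeWaveSum m g k β) =
      planeWaveSum (fun j => m j * k j 2) (fun j => deriv (g j)) k β := by
  funext x r t z
  refine (HasDerivAt.fun_sum fun j _ => ?_).deriv
  have hL : HasDerivAt (fun s => k j 0 * x + k j 1 * r + k j 2 * s + k j 3 * z + β j)
      (k j 2) t := by
    simpa using ((((hasDerivAt_id t).const_mul (k j 2)).const_add (k j 0 * x + k j 1 * r)).add_const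
      (k j 3 * z)).add_const (β j)
  exact ((((hg j) _).hasDerivAt.comp t hL).const_mul (m j)).congr_deriv (by ring)

end PlaneWaveSum

/-- the Legendre-transformation condition
`ϑ_tt ϑ_rr − ϑ_rt² ≠ 0` for the four-term functional ansatz for the second
heavenly equation. -/
theorem stmt15 (g₁ g₂ g₃ g₄ : ℂ → ℂ)
    (hg₁ : ContDiff ℂ 2 g₁) (hg₂ : ContDiff ℂ 2 g₂)
    (hg₃ : ContDiff ℂ 2 g₃) (hg₄ : ContDiff ℂ 2 g₄)
    (a₁ a₂ a₃ a₄ b₁ b₂ b₃ b₄ c₁ c₂ c₃ c₄ d₁ d₂ d₃ d₄ β₁ β₂ β₃ β₄ : ℂ)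
    (ϑ : ℂ → ℂ → ℂ → ℂ → ℂ)
    (hϑ : ϑ = fun x r t z =>
      g₁ (a₁ * x + a₂ * r + a₃ * t + a₄ * z + β₁)
        + g₂ (b₁ * x + b₂ * r + b₃ * t + b₄ * z + β₂)
        + g₃ (c₁ * x + c₂ * r + c₃ * t + c₄ * z + β₃)
        + g₄ (d₁ * x + d₂ * r + d₃ * t + d₄ * z + β₄)) :
    ∀ x r t z : ℂ,
      (pd3 (pd3 ϑ) x r t z * pd2 (pd2 ϑ) x r t z - (pd2 (pd3 ϑ) x r t z) ^ 2
        = (b₂ * d₃ - b₃ * d₂) ^ 2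
              * deriv (deriv g₂) (b₁ * x + b₂ * r + b₃ * t + b₄ * z + β₂)
              * deriv (deriv g₄) (d₁ * x + d₂ * r + d₃ * t + d₄ * z + β₄)
          + (b₂ * c₃ - b₃ * c₂) ^ 2
              * deriv (deriv g₂) (b₁ * x + b₂ * r + b₃ * t + b₄ * z + β₂)
              * deriv (deriv g₃) (c₁ * x + c₂ * r + c₃ * t + c₄ * z + β₃)
          + (a₂ * d₃ - a₃ * d₂) ^ 2
              * deriv (deriv g₁) (a₁ * x + a₂ * r + a₃ * t + a₄ * z + β₁)
              * deriv (deriv g₄) (d₁ * x + d₂ * r + d₃ * t + d₄ * z + β₄)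
          + (c₂ * a₃ - c₃ * a₂) ^ 2
              * deriv (deriv g₁) (a₁ * x + a₂ * r + a₃ * t + a₄ * z + β₁)
              * deriv (deriv g₃) (c₁ * x + c₂ * r + c₃ * t + c₄ * z + β₃)
          + (a₂ * b₃ - a₃ * b₂) ^ 2
              * deriv (deriv g₁) (a₁ * x + a₂ * r + a₃ * t + a₄ * z + β₁)
              * deriv (deriv g₂) (b₁ * x + b₂ * r + b₃ * t + b₄ * z + β₂)
          + (c₂ * d₃ - c₃ * d₂) ^ 2
              * deriv (deriv g₃) (c₁ * x + c₂ * r + c₃ * t + c₄ * z + β₃)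
              * deriv (deriv g₄) (d₁ * x + d₂ * r + d₃ * t + d₄ * z + β₄))
      ∧ (pd3 (pd3 ϑ) x r t z * pd2 (pd2 ϑ) x r t z - (pd2 (pd3 ϑ) x r t z) ^ 2 ≠ 0
        ↔ (b₂ * d₃ - b₃ * d₂) ^ 2
              * deriv (deriv g₂) (b₁ * x + b₂ * r + b₃ * t + b₄ * z + β₂)
              * deriv (deriv g₄) (d₁ * x + d₂ * r + d₃ * t + d₄ * z + β₄)
          + (b₂ * c₃ - b₃ * c₂) ^ 2
              * deriv (deriv g₂) (b₁ * x + b₂ * r + b₃ * t + b₄ * z + β₂)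
              * deriv (deriv g₃) (c₁ * x + c₂ * r + c₃ * t + c₄ * z + β₃)
          + (a₂ * d₃ - a₃ * d₂) ^ 2
              * deriv (deriv g₁) (a₁ * x + a₂ * r + a₃ * t + a₄ * z + β₁)
              * deriv (deriv g₄) (d₁ * x + d₂ * r + d₃ * t + d₄ * z + β₄)
          + (c₂ * a₃ - c₃ * a₂) ^ 2
              * deriv (deriv g₁) (a₁ * x + a₂ * r + a₃ * t + a₄ * z + β₁)
              * deriv (deriv g₃) (c₁ * x + c₂ * r + c₃ * t + c₄ * z + β₃)
          + (a₂ * b₃ - a₃ * b₂) ^ 2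
              * deriv (deriv g₁) (a₁ * x + a₂ * r + a₃ * t + a₄ * z + β₁)
              * deriv (deriv g₂) (b₁ * x + b₂ * r + b₃ * t + b₄ * z + β₂)
          + (c₂ * d₃ - c₃ * d₂) ^ 2
              * deriv (deriv g₃) (c₁ * x + c₂ * r + c₃ * t + c₄ * z + β₃)
              * deriv (deriv g₄) (d₁ * x + d₂ * r + d₃ * t + d₄ * z + β₄) ≠ 0) := by
  intro x r t z
  have hϑ' : ϑ = planeWaveSum 1 ![g₁, g₂, g₃, g₄]
      ![![a₁, a₂, a₃, a₄], ![b₁, b₂, b₃, b₄], ![c₁, c₂, c₃, c₄], ![d₁, d₂, d₃, d₄]]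
      ![β₁, β₂, β₃, β₄] := by
    subst hϑ
    funext x r t z
    simp [planeWaveSum, Fin.sum_univ_four]
  have hg : ∀ j, ContDiff ℂ 2 (![g₁, g₂, g₃, g₄] j) := by
    intro j
    fin_cases j <;> assumption
  have hd : ∀ j, Differentiable ℂ (![g₁, g₂, g₃, g₄] j) :=
    fun j => (hg j).differentiable two_ne_zero
  have hd' : ∀ j, Differentiable ℂ (deriv (![g₁, g₂, g₃, g₄] j)) :=
    fun j => (hg j).differentiable_deriv_two
  refine (fun h => ⟨h, h ▸ Iff.rfl⟩) ?_
  rw [hϑ', pd3_planeWaveSum hd, pd3_planeWaveSum hd', pd2_planeWaveSum hd,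
    pd2_planeWaveSum hd', pd2_planeWaveSum hd']
  simp only [planeWaveSum, Fin.sum_univ_four, Pi.one_apply, one_mul, Matrix.cons_val',
    Matrix.cons_val, Matrix.cons_val_fin_one, Matrix.cons_val_zero, Matrix.cons_val_one]
  ring
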